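/- Let K be a field, r ≥ 1 an integer, and 0 ≤ a ≤ r an integer. Let k ∈ SL₂(K⟦t⟧) with k ≡ 1 (mod t^{2r}), let h₁, h₂ ∈ SL₂(K⟦t⟧), and set g = h₁·diag(t^a, t^{−a})·h₂ ∈ SL₂(K((t))). Then g⁻¹·k·g has all of its entries in K⟦t⟧, i.e. g⁻¹·k·g ∈ SL₂(K⟦t⟧). (Thus right translation by k fixes the coset g·SL₂(K⟦t⟧): elements of G^{2r} act trivially on the points of the closure of the r-th cell of the affine Grassmannian of SL₂.) -/

import Mathlib

open Matrix PowerSeries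

/-- The inclusion of formal power series into Laurent series. -/
noncomputable def PStoLS (K : Type*) [Field K] : PowerSeries K →+* LaurentSeries K :=
  HahnSeries.ofPowerSeries ℤ K

/-- The inclusion `SL₂(K⟦t⟧) → SL₂(K((t)))`. -/
noncomputable def SL2toLS (K : Type*) [Field K] :
    SpecialLinearGroup (Fin 2) (PowerSeries K) →* SpecialLinearGroup (Fin 2) (LaurentSeries K) :=
  SpecialLinearGroup.map (PStoLS K)

/-- The element `t` of `K((t))`. -/
noncomputable def tLS (K : Type*) [Field K] : LaurentSeries K :=
  ((X : PowerSeries K) : LaurentSeries K)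

/-- Membership in the congruence subgroup `G^n ⊆ SL₂(K⟦t⟧)`: every entry of `g - 1`
is divisible by `t^n`. -/
def InCongr (K : Type*) [Field K] (n : ℕ) (g : SpecialLinearGroup (Fin 2) (PowerSeries K)) :
    Prop :=
  ∀ i j, (X : PowerSeries K) ^ n ∣ ((g : Matrix (Fin 2) (Fin 2) (PowerSeries K)) - 1) i j

/-!
Conjugating `k` by `h₁` keeps it in the normal subgroup `G^{2r}`, so its off-diagonal entries are
divisible by `t^{2r}`, hence by `t^{2a}`. Conjugation by `diag(t^a, t^{-a})` fixes the diagonal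
entries and multiplies the off-diagonal ones by `t^{∓2a}`, so the result stays integral, and
conjugating further by `h₂ ∈ SL₂(K⟦t⟧)` does not leave `SL₂(K⟦t⟧)`.
-/

section

variable {K : Type*} [Field K]

lemma PStoLS_X : PStoLS K X = tLS K := rfl

lemma tLS_ne_zero : tLS K ≠ 0 := by
  rw [tLS, HahnSeries.ofPowerSeries_X]
  exact HahnSeries.single_ne_zero one_ne_zero

lemma coe_SL2toLS (u : SpecialLinearGroup (Fin 2) (PowerSeries K)) :
    ((SL2toLS K u : SpecialLinearGroup (Fin 2) (LaurentSeries K)) :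
      Matrix (Fin 2) (Fin 2) (LaurentSeries K)) =
    (u : Matrix (Fin 2) (Fin 2) (PowerSeries K)).map (PStoLS K) := rfl

namespace InCongr

variable {n : ℕ} {k : SpecialLinearGroup (Fin 2) (PowerSeries K)}

lemma conj (hk : InCongr K n k) (h : SpecialLinearGroup (Fin 2) (PowerSeries K)) :
    InCongr K n (h⁻¹ * k * h) := by
  have hsub : ((h⁻¹ * k * h : SpecialLinearGroup (Fin 2) (PowerSeries K)) :
      Matrix (Fin 2) (Fin 2) (PowerSeries K)) - 1 =
      (h⁻¹ : SpecialLinearGroup (Fin 2) (PowerSeries K)) *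
        ((k : Matrix (Fin 2) (Fin 2) (PowerSeries K)) - 1) * h := by
    simp only [Matrix.SpecialLinearGroup.coe_mul, Matrix.SpecialLinearGroup.coe_inv, mul_sub,
      sub_mul, mul_one, Matrix.adjugate_mul, Matrix.SpecialLinearGroup.det_coe, one_smul]
  intro i j
  rw [hsub]
  simp only [Matrix.mul_apply, Finset.sum_mul]
  exact Finset.dvd_sum fun x _ => Finset.dvd_sum fun y _ =>
    ((hk y x).mul_left _).mul_right _

lemma pow_dvd_of_ne (hk : InCongr K n k) {i j : Fin 2} (hij : i ≠ j) :
    (X : PowerSeries K) ^ n ∣ k i j := by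
  simpa [Matrix.one_apply_ne hij] using hk i j

end InCongr

lemma diag_inv_mul_mul_diag_fin_two {F : Type*} [Field F] {u : F} (hu : u ≠ 0) (p q r s : F) :
    !![u⁻¹, 0; 0, u] * !![p, u ^ 2 * q; r, s] * !![u, 0; 0, u⁻¹] = !![p, q; u ^ 2 * r, s] := by
  simp only [Matrix.mul_fin_two, mul_zero, zero_mul, add_zero, zero_add]
  field_simp

lemma exists_SL2toLS_eq_diag_conj {a : ℕ} (m : SpecialLinearGroup (Fin 2) (PowerSeries K))
    (hm : (X : PowerSeries K) ^ (2 * a) ∣ m 0 1)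
    (d : SpecialLinearGroup (Fin 2) (LaurentSeries K))
    (hd : (d : Matrix (Fin 2) (Fin 2) (LaurentSeries K)) = !![tLS K ^ a, 0; 0, (tLS K ^ a)⁻¹]) :
    ∃ w : SpecialLinearGroup (Fin 2) (PowerSeries K), SL2toLS K w = d⁻¹ * SL2toLS K m * d := by
  obtain ⟨b, hb⟩ := hm
  have hdet : (!![m 0 0, b; X ^ (2 * a) * m 1 0, m 1 1] :
      Matrix (Fin 2) (Fin 2) (PowerSeries K)).det = 1 := by
    have := m.det_coe
    rw [Matrix.det_fin_two, hb] at this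
    rw [Matrix.det_fin_two_of]
    linear_combination this
  refine ⟨⟨_, hdet⟩, Subtype.ext ?_⟩
  simp only [Matrix.SpecialLinearGroup.coe_mul, Matrix.SpecialLinearGroup.coe_inv, hd,
    Matrix.adjugate_fin_two_of, coe_SL2toLS]
  change Matrix.map !![m 0 0, b; X ^ (2 * a) * m 1 0, m 1 1] (PStoLS K) = _
  rw [Matrix.eta_fin_two ((m : Matrix (Fin 2) (Fin 2) (PowerSeries K)).map _)]
  simp only [neg_zero, Matrix.map_apply, hb, map_mul, map_pow, PStoLS_X, pow_mul']
  rw [diag_inv_mul_mul_diag_fin_two (pow_ne_zero a tLS_ne_zero)]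
  ext i j
  fin_cases i <;> fin_cases j <;> simp [PStoLS_X]

end

theorem stmt4_general {K : Type*} [Field K] (r a : ℕ) (ha : a ≤ r)
    (k : SpecialLinearGroup (Fin 2) (PowerSeries K)) (hk : InCongr K (2 * r) k)
    (h₁ h₂ : SpecialLinearGroup (Fin 2) (PowerSeries K))
    (d : SpecialLinearGroup (Fin 2) (LaurentSeries K))
    (hd : (d : Matrix (Fin 2) (Fin 2) (LaurentSeries K)) = !![tLS K ^ a, 0; 0, (tLS K ^ a)⁻¹])
    (g : SpecialLinearGroup (Fin 2) (LaurentSeries K))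
    (hg : g = SL2toLS K h₁ * d * SL2toLS K h₂) :
    ∃ w : SpecialLinearGroup (Fin 2) (PowerSeries K),
      SL2toLS K w = g⁻¹ * SL2toLS K k * g := by
  have hm : (X : PowerSeries K) ^ (2 * a) ∣ (h₁⁻¹ * k * h₁) 0 1 :=
    (pow_dvd_pow _ (by omega)).trans ((hk.conj h₁).pow_dvd_of_ne zero_ne_one)
  obtain ⟨w, hw⟩ := exists_SL2toLS_eq_diag_conj _ hm d hd
  refine ⟨h₂⁻¹ * w * h₂, ?_⟩
  simp only [map_mul, map_inv, hw, hg]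
  group

/-- If `k ∈ G^{2r}` and `g = h₁·diag(t^a, t^{-a})·h₂` with `h₁, h₂ ∈ SL₂(K⟦t⟧)` and
`0 ≤ a ≤ r`, then `g⁻¹·k·g ∈ SL₂(K⟦t⟧)`: elements of `G^{2r}` act trivially on the points
of the closure of the `r`-th cell of the affine Grassmannian of `SL₂`. -/
theorem stmt4 {K : Type*} [Field K] (r a : ℕ) (hr : 1 ≤ r) (ha : a ≤ r)
    (k : SpecialLinearGroup (Fin 2) (PowerSeries K)) (hk : InCongr K (2 * r) k)
    (h₁ h₂ : SpecialLinearGroup (Fin 2) (PowerSeries K))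
    (d : SpecialLinearGroup (Fin 2) (LaurentSeries K))
    (hd : (d : Matrix (Fin 2) (Fin 2) (LaurentSeries K)) = !![tLS K ^ a, 0; 0, (tLS K ^ a)⁻¹])
    (g : SpecialLinearGroup (Fin 2) (LaurentSeries K))
    (hg : g = SL2toLS K h₁ * d * SL2toLS K h₂) :
    ∃ w : SpecialLinearGroup (Fin 2) (PowerSeries K),
      SL2toLS K w = g⁻¹ * SL2toLS K k * g :=
  stmt4_general r a ha k hk h₁ h₂ d hd g hg
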